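/- For any loopless digraph D on n vertices, if i(D,2) = s(D,2) = τ(D), then there exists f : (Fin 2)^n → (Fin 2)^n with interaction graph a subgraph of D having at least 2^{τ(D)} fixed points (i.e., g(D,2) = τ(D)). -/

import Mathlib

/-- `fv` depends essentially on coordinate `u`. -/
def dependsOn {n : ℕ} {A : Type} (fv : (Fin n → A) → A) (u : Fin n) : Prop :=
  ∃ x y : Fin n → A, (∀ w, w ≠ u → x w = y w) ∧ fv x ≠ fv y

/-- `f` belongs to `F(D,q)`: its interaction graph is a subgraph of `D`. -/
def inF {n : ℕ} {A : Type} (D : Fin n → Fin n → Prop) (f : (Fin n → A) → (Fin n → A)) : Prop :=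
  ∀ u v, dependsOn (fun x => f x v) u → D u v

/-- `I` is a feedback vertex set of `D`: removing `I` leaves no directed cycle. -/
def isFVS {n : ℕ} (D : Fin n → Fin n → Prop) (I : Finset (Fin n)) : Prop :=
  ∀ v, ¬ Relation.TransGen (fun a b => D a b ∧ a ∉ I ∧ b ∉ I) v v

/-- minimum size of a feedback vertex set. -/
noncomputable def tau {n : ℕ} (D : Fin n → Fin n → Prop) : ℕ :=
  sInf {k | ∃ I : Finset (Fin n), isFVS D I ∧ I.card = k}

/-- the q-instability of D. -/
noncomputable def instab {n : ℕ} (D : Fin n → Fin n → Prop) (q : ℕ) : ℕ :=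
  sSup {m | ∃ f : (Fin n → Fin q) → (Fin n → Fin q), inF D f ∧
    ∀ x, m ≤ hammingDist x (f x)}

/-- the q-stability of D. -/
noncomputable def stab {n : ℕ} (D : Fin n → Fin n → Prop) (q : ℕ) : ℕ :=
  sSup {m | ∃ f : (Fin n → Fin q) → (Fin n → Fin q), inF D f ∧
    ∀ x, m ≤ (Finset.univ.filter (fun v => f x v = x v)).card}

/-- `S` is the vertex set of a directed cycle of `D`. -/
def isCycleSet {n : ℕ} (D : Fin n → Fin n → Prop) (S : Finset (Fin n)) : Prop :=
  ∃ m : ℕ, 1 ≤ m ∧ ∃ c : ZMod m → Fin n, Function.Injective c ∧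
    Set.range c = ↑S ∧ ∀ i, D (c i) (c (i + 1))

/-- maximum number of pairwise vertex-disjoint cycles. -/
noncomputable def nu {n : ℕ} (D : Fin n → Fin n → Prop) : ℕ :=
  sSup {k | ∃ L : Fin k → Finset (Fin n), (∀ i, isCycleSet D (L i)) ∧
    ∀ i j, i ≠ j → Disjoint (L i) (L j)}

/-- `S` is the vertex set of a chordless directed cycle of `D`. -/
def isChordlessCycle {n : ℕ} (D : Fin n → Fin n → Prop) (S : Finset (Fin n)) : Prop :=
  ∃ m : ℕ, 1 ≤ m ∧ ∃ c : ZMod m → Fin n, Function.Injective c ∧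
    Set.range c = ↑S ∧ (∀ i, D (c i) (c (i + 1))) ∧
    ∀ i j, D (c i) (c j) → j = i + 1

/-- chromatic number of the intersection graph of chordless cycles. -/
noncomputable def chromCycles {n : ℕ} (D : Fin n → Fin n → Prop) : ℕ :=
  sInf {k | ∃ col : {S : Finset (Fin n) // isChordlessCycle D S} → Fin k,
    ∀ S T, S.1 ≠ T.1 → (S.1 ∩ T.1).Nonempty → col S ≠ col T}

lemma agree_aux {n : ℕ} {D : Fin n → Fin n → Prop}
    {f : (Fin n → Fin 2) → (Fin n → Fin 2)} (hf : inF D f) (v : Fin n) :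
    ∀ (k : ℕ) (x y : Fin n → Fin 2),
      (Finset.univ.filter fun u => x u ≠ y u).card ≤ k →
      (∀ u, D u v → x u = y u) → f x v = f y v := by
  intro k
  induction k with
  | zero =>
    intro x y hcard _
    have hxy : x = y := by
      funext u
      by_contra h
      have hm : u ∈ Finset.univ.filter fun u => x u ≠ y u := by
        simp [h]
      have := Finset.card_pos.mpr ⟨u, hm⟩
      omega
    rw [hxy]
  | succ k ih =>
    intro x y hcard hagree
    by_cases hxy : x = y
    · rw [hxy]
    · obtain ⟨w, hw⟩ : ∃ w, x w ≠ y w := by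
        by_contra h; push_neg at h; exact hxy (funext h)
      have hDwv : ¬ D w v := fun h => hw (hagree w h)
      have h1 : f (Function.update y w (x w)) v = f y v := by
        by_contra h
        exact hDwv (hf w v ⟨Function.update y w (x w), y,
          fun u hu => Function.update_of_ne hu _ _, h⟩)
      rw [← h1]
      have hwmem : w ∈ Finset.univ.filter fun u => x u ≠ y u := by simp [hw]
      apply ih x (Function.update y w (x w))
      · have hsub : (Finset.univ.filter fun u => x u ≠ Function.update y w (x w) u) ⊆
            (Finset.univ.filter fun u => x u ≠ y u) \ {w} := by
          intro u hu
          simp only [Finset.mem_filter, Finset.mem_univ, true_and] at hu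
          by_cases h : u = w
          · subst h; simp [Function.update_self] at hu
          · rw [Function.update_of_ne h] at hu
            simp [Finset.mem_sdiff, h, hu]
        have := Finset.card_le_card hsub
        rw [Finset.card_sdiff_of_subset (Finset.singleton_subset_iff.mpr hwmem)] at this
        have hpos := Finset.card_pos.mpr ⟨w, hwmem⟩
        rw [Finset.card_singleton] at this
        omega
      · intro u hu
        by_cases h : u = w
        · subst h; simp [Function.update_self]
        · rw [Function.update_of_ne h]; exact hagree u hu

lemma agree_on_preds {n : ℕ} {D : Fin n → Fin n → Prop}
    {f : (Fin n → Fin 2) → (Fin n → Fin 2)} (hf : inF D f) (v : Fin n)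
    (x y : Fin n → Fin 2) (h : ∀ u, D u v → x u = y u) : f x v = f y v :=
  agree_aux hf v _ x y le_rfl h

lemma exists_partial_fix {n : ℕ} {D : Fin n → Fin n → Prop} {I : Finset (Fin n)}
    (hI : isFVS D I) {f : (Fin n → Fin 2) → (Fin n → Fin 2)} (hf : inF D f)
    (z : Fin n → Fin 2) :
    ∃ x : Fin n → Fin 2, (∀ v ∈ I, x v = z v) ∧ (∀ v ∉ I, f x v = x v) := by
  classical
  set R : Fin n → Fin n → Prop := fun a b => D a b ∧ a ∉ I ∧ b ∉ I with hR
  set hgt : Fin n → ℕ := fun v =>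
    (Finset.univ.filter fun u => Relation.TransGen R u v).card with hhgt
  have hmono : ∀ u v, R u v → hgt u < hgt v := by
    intro u v huv
    apply Finset.card_lt_card
    constructor
    · intro w hw
      simp only [Finset.mem_filter, Finset.mem_univ, true_and] at hw ⊢
      exact hw.tail huv
    · intro hsub
      have hu : u ∈ Finset.univ.filter fun w => Relation.TransGen R w v := by
        simp only [Finset.mem_filter, Finset.mem_univ, true_and]
        exact Relation.TransGen.single huv
      have := hsub hu
      simp only [Finset.mem_filter, Finset.mem_univ, true_and] at this
      exact hI u this
  set F : (Fin n → Fin 2) → (Fin n → Fin 2) :=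
    fun x v => if v ∈ I then z v else f x v with hF
  have hFI : ∀ x, ∀ v ∈ I, F x v = z v := by
    intro x v hv; simp [hF, hv]
  have key : ∀ (m : ℕ) (v : Fin n), v ∉ I → hgt v < m → ∀ k, hgt v < k →
      F^[k+1] z v = F^[k] z v := by
    intro m
    induction m with
    | zero => intro v _ h; omega
    | succ m ih =>
      intro v hvI hvm k hk
      obtain ⟨k', rfl⟩ : ∃ k', k = k' + 1 := ⟨k - 1, by omega⟩
      have hzI : ∀ (u : Fin n), u ∈ I → ∀ j, F^[j+1] z u = z u := by
        intro u huI j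
        rw [Function.iterate_succ_apply' F j]
        exact hFI _ u huI
      have main : f (F^[k'+1] z) v = f (F^[k'] z) v := by
        apply agree_on_preds hf v
        intro u hu
        by_cases huI : u ∈ I
        · rcases k' with _ | k''
          · rw [hzI u huI 0]; rfl
          · rw [hzI u huI (k''+1), hzI u huI k'']
        · have hRuv : R u v := ⟨hu, huI, hvI⟩
          have hlt := hmono u v hRuv
          exact ih u huI (by omega) k' (by omega)
      calc F^[k'+1+1] z v = F (F^[k'+1] z) v := by
              rw [Function.iterate_succ_apply' F (k'+1)]
        _ = f (F^[k'+1] z) v := by simp [hF, hvI]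
        _ = f (F^[k'] z) v := main
        _ = F (F^[k'] z) v := by simp [hF, hvI]
        _ = F^[k'+1] z v := by rw [Function.iterate_succ_apply' F k']
  set K : ℕ := (Finset.univ.sup hgt) + 1 with hK
  refine ⟨F^[K] z, ?_, ?_⟩
  · intro v hv
    rw [hK, Function.iterate_succ_apply' F _, hFI _ v hv]
  · intro v hv
    have hvK : hgt v < K := by
      have := Finset.le_sup (f := hgt) (Finset.mem_univ v)
      omega
    have h1 := key (hgt v + 1) v hv (by omega) K hvK
    rw [Function.iterate_succ_apply' F K] at h1
    have h2 : F (F^[K] z) v = f (F^[K] z) v := by simp [hF, hv]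
    rw [← h2, h1]

/-- if i(D,2) = s(D,2) = τ(D), then g(D,2) = τ(D), i.e. some f ∈ F(D,2)
has at least 2^{τ(D)} fixed points. -/
theorem stmt18 (n : ℕ) (D : Fin n → Fin n → Prop) (hD : ∀ v, ¬ D v v)
    (hi : instab D 2 = tau D) (hs : stab D 2 = tau D) :
    ∃ f : (Fin n → Fin 2) → (Fin n → Fin 2), inF D f ∧
      2 ^ tau D ≤ (Finset.univ.filter (fun x : Fin n → Fin 2 => f x = x)).card := by

  classical
  -- a minimum feedback vertex set
  obtain ⟨I, hIfvs, hIcard⟩ :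
      ∃ I : Finset (Fin n), isFVS D I ∧ I.card = tau D := by
    have hne : {k | ∃ I : Finset (Fin n), isFVS D I ∧ I.card = k}.Nonempty := by
      refine ⟨(Finset.univ : Finset (Fin n)).card, Finset.univ, ?_, rfl⟩
      intro v hv
      cases hv with
      | single h => exact h.2.1 (Finset.mem_univ _)
      | tail _ h => exact h.2.2 (Finset.mem_univ _)
    exact Nat.sInf_mem hne
  -- a function achieving instability tau D
  obtain ⟨f₁, hf₁F, hf₁⟩ :
      ∃ f₁ : (Fin n → Fin 2) → (Fin n → Fin 2), inF D f₁ ∧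
        ∀ x, tau D ≤ hammingDist x (f₁ x) := by
    set S : Set ℕ := {m | ∃ f : (Fin n → Fin 2) → (Fin n → Fin 2), inF D f ∧
      ∀ x, m ≤ hammingDist x (f x)} with hS
    have hSne : S.Nonempty := by
      refine ⟨0, fun _ _ => 0, ?_, fun x => Nat.zero_le _⟩
      rintro u v ⟨x, y, -, hne⟩
      exact absurd rfl hne
    have hSbdd : BddAbove S := by
      refine ⟨n, ?_⟩
      rintro m ⟨f, -, hm⟩
      calc m ≤ hammingDist (fun _ => 0) (f fun _ => 0) := hm _
        _ ≤ Fintype.card (Fin n) := hammingDist_le_card_fintype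
        _ = n := Fintype.card_fin n
    have hmem : sSup S ∈ S := Nat.sSup_mem hSne hSbdd
    have heq : sSup S = tau D := hi
    rw [heq] at hmem
    exact hmem
  -- the modified function: negate on I
  set f : (Fin n → Fin 2) → (Fin n → Fin 2) :=
    fun x v => if v ∈ I then 1 - f₁ x v else f₁ x v with hfdef
  have hfF : inF D f := by
    rintro u v ⟨x, y, hxy, hne⟩
    refine hf₁F u v ⟨x, y, hxy, fun h => hne ?_⟩
    simp only [hfdef, h]
  -- each assignment on I extends to a fixed point of f
  have hfix : ∀ z : Fin n → Fin 2, ∃ x : Fin n → Fin 2,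
      (∀ v ∈ I, x v = z v) ∧ f x = x := by
    intro z
    obtain ⟨x, hxI, hxout⟩ := exists_partial_fix hIfvs hf₁F z
    refine ⟨x, hxI, ?_⟩
    have hΔ : (Finset.univ.filter fun v => x v ≠ f₁ x v) = I := by
      apply Finset.eq_of_subset_of_card_le
      · intro v hv
        simp only [Finset.mem_filter, Finset.mem_univ, true_and] at hv
        by_contra hvI
        exact hv (hxout v hvI).symm
      · calc I.card = tau D := hIcard
          _ ≤ hammingDist x (f₁ x) := hf₁ x
          _ = (Finset.univ.filter fun v => x v ≠ f₁ x v).card := rfl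
    funext v
    by_cases hv : v ∈ I
    · have hvne : x v ≠ f₁ x v := by
        have : v ∈ Finset.univ.filter fun v => x v ≠ f₁ x v := hΔ ▸ hv
        simpa using this
      have : (1 : Fin 2) - f₁ x v = x v := by
        revert hvne
        generalize f₁ x v = a
        generalize x v = b
        revert a b
        decide
      simp only [hfdef, if_pos hv, this]
    · simp only [hfdef, if_neg hv]
      exact hxout v hv
  -- counting fixed points
  set e : (↥I → Fin 2) → (Fin n → Fin 2) := fun w =>
    (hfix (fun v => if h : v ∈ I then w ⟨v, h⟩ else 0)).choose with he
  have heI : ∀ w (v : Fin n) (h : v ∈ I), e w v = w ⟨v, h⟩ := by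
    intro w v h
    have := (hfix (fun v => if h : v ∈ I then w ⟨v, h⟩ else 0)).choose_spec.1 v h
    rw [he] at *
    simp only [this, dif_pos h]
  have hefix : ∀ w, f (e w) = e w := fun w =>
    (hfix (fun v => if h : v ∈ I then w ⟨v, h⟩ else 0)).choose_spec.2
  have hcount : Fintype.card (↥I → Fin 2) ≤
      (Finset.univ.filter (fun x : Fin n → Fin 2 => f x = x)).card := by
    rw [← Finset.card_univ]
    apply Finset.card_le_card_of_injOn e
    · intro w _
      simp only [Finset.mem_coe, Finset.mem_filter, Finset.mem_univ, true_and]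
      exact hefix w
    · intro w₁ _ w₂ _ hw
      funext v
      rw [← heI w₁ v.1 v.2, ← heI w₂ v.1 v.2, hw]
  refine ⟨f, hfF, ?_⟩
  calc 2 ^ tau D = 2 ^ I.card := by rw [hIcard]
    _ = Fintype.card (↥I → Fin 2) := by
        rw [Fintype.card_fun, Fintype.card_fin, Fintype.card_coe]
    _ ≤ _ := hcount
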